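/- Mean equicontinuity is preserved under factor maps: if π: (X,T) → (Y,S) is a factor map (continuous surjection with π∘T = S∘π) between dynamical systems on compact metric spaces and (X,T) is mean equicontinuous, then (Y,S) is mean equicontinuous. -/

import Mathlib

open Filter Topology MeasureTheory
open scoped Classical

noncomputable def avgDist {Z : Type*} [MetricSpace Z] (R : Z → Z) (x y : Z) (n : ℕ) : ℝ :=
  (n : ℝ)⁻¹ * ∑ i ∈ Finset.range n, dist (R^[i] x) (R^[i] y)

def MeanEquicontinuous {Z : Type*} [MetricSpace Z] (R : Z → Z) : Prop :=
  ∀ ε > 0, ∃ δ > 0, ∀ x y : Z, dist x y < δ →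
    Filter.limsup (avgDist R x y) Filter.atTop < ε

def MeanEqPtAt {Z : Type*} [MetricSpace Z] (R : Z → Z) (x : Z) : Prop :=
  ∀ ε > 0, ∃ δ > 0, ∀ y : Z, dist x y < δ →
    Filter.limsup (avgDist R x y) Filter.atTop < ε

def MeanSensitive {Z : Type*} [MetricSpace Z] (R : Z → Z) : Prop :=
  ∃ δ > 0, ∀ x : Z, ∀ ε > 0, ∃ y : Z, dist x y < ε ∧
    δ < Filter.limsup (avgDist R x y) Filter.atTop

/-!
Uniform continuity of `π` bounds `dist (π a) (π b)` by `ε + C * dist a b`, so along orbits the mean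
distance in `Y` is at most `ε` plus `C` times the mean distance in `X`: points of `Y` with close
preimages are mean close. Since `π` is a closed map, every point near `w ∈ Y` has a preimage close to
the fibre over `w`, so `S` is mean equicontinuous at `w`. On a compact space, mean equicontinuity at
every point is uniform by the Lebesgue number lemma and the triangle inequality for mean distances.
-/

open Metric Function

section avgDist

variable {Z : Type*} [MetricSpace Z] (R : Z → Z)

lemma avgDist_nonneg (x y : Z) (n : ℕ) : 0 ≤ avgDist R x y n :=
  mul_nonneg (inv_nonneg.2 n.cast_nonneg) (Finset.sum_nonneg fun _ _ => dist_nonneg)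

lemma avgDist_comm (x y : Z) (n : ℕ) : avgDist R x y n = avgDist R y x n := by
  simp only [avgDist, dist_comm]

lemma avgDist_triangle (x y z : Z) (n : ℕ) :
    avgDist R x z n ≤ avgDist R x y n + avgDist R y z n := by
  rw [avgDist, avgDist, avgDist, ← mul_add, ← Finset.sum_add_distrib]
  gcongr with i
  exact dist_triangle _ _ _

lemma avgDist_le_diam [BoundedSpace Z] (x y : Z) (n : ℕ) :
    avgDist R x y n ≤ diam (Set.univ : Set Z) := by
  have hdist : ∀ a b : Z, dist a b ≤ diam (Set.univ : Set Z) := fun a b =>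
    dist_le_diam_of_mem BoundedSpace.bounded_univ trivial trivial
  rcases n.eq_zero_or_pos with rfl | hn
  · simpa [avgDist] using hdist x x
  · calc avgDist R x y n ≤ (n : ℝ)⁻¹ * ∑ _i ∈ Finset.range n, diam (Set.univ : Set Z) := by
          unfold avgDist
          gcongr
          exact hdist _ _
      _ = diam (Set.univ : Set Z) := by
          rw [Finset.sum_const, Finset.card_range, nsmul_eq_mul, ← mul_assoc,
            inv_mul_cancel₀ (by positivity), one_mul]

lemma isBoundedUnder_avgDist [BoundedSpace Z] (x y : Z) :
    IsBoundedUnder (· ≤ ·) atTop (avgDist R x y) :=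
  isBoundedUnder_of ⟨_, avgDist_le_diam R x y⟩

lemma isCoboundedUnder_avgDist (x y : Z) : IsCoboundedUnder (· ≤ ·) atTop (avgDist R x y) :=
  (isBoundedUnder_of ⟨0, avgDist_nonneg R x y⟩).isCoboundedUnder_le

theorem MeanEquicontinuous.of_forall_meanEqPtAt [CompactSpace Z] (h : ∀ z, MeanEqPtAt R z) :
    MeanEquicontinuous R := by
  intro ε hε
  choose δ hδ0 hδ using fun z => h z (ε / 3) (by positivity)
  obtain ⟨η, hη0, hη⟩ := lebesgue_number_lemma_of_metric (c := fun z => ball z (δ z))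
    isCompact_univ (fun _ => isOpen_ball) fun z _ => Set.mem_iUnion.2 ⟨z, mem_ball_self (hδ0 z)⟩
  refine ⟨η, hη0, fun x y hxy => ?_⟩
  obtain ⟨z, hz⟩ := hη x trivial
  have hx := hδ z x (mem_ball'.1 (hz (mem_ball_self hη0)))
  have hy := hδ z y (mem_ball'.1 (hz (mem_ball'.2 hxy)))
  have hmean : limsup (avgDist R x y) atTop ≤ 2 * ε / 3 := by
    refine limsup_le_of_le (isCoboundedUnder_avgDist R x y) ?_
    filter_upwards [eventually_lt_of_limsup_lt hx (isBoundedUnder_avgDist R z x),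
      eventually_lt_of_limsup_lt hy (isBoundedUnder_avgDist R z y)] with n hxn hyn
    linarith [avgDist_triangle R x z y n, avgDist_comm R x z n]
  linarith

end avgDist

theorem UniformContinuous.exists_dist_le_add_mul {X Y : Type*} [PseudoMetricSpace X]
    [PseudoMetricSpace Y] [BoundedSpace Y] {f : X → Y} (hf : UniformContinuous f) {ε : ℝ}
    (hε : 0 < ε) : ∃ C > 0, ∀ a b, dist (f a) (f b) ≤ ε + C * dist a b := by
  obtain ⟨η, hη0, hη⟩ := uniformContinuous_iff.1 hf ε hε
  have hdiam : 0 ≤ diam (Set.univ : Set Y) := diam_nonneg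
  refine ⟨(diam (Set.univ : Set Y) + 1) / η, by positivity, fun a b => ?_⟩
  have hC : 0 ≤ (diam (Set.univ : Set Y) + 1) / η * dist a b := by positivity
  rcases lt_or_ge (dist a b) η with hab | hab
  · linarith [hη hab]
  · calc dist (f a) (f b) ≤ diam (Set.univ : Set Y) :=
          dist_le_diam_of_mem BoundedSpace.bounded_univ trivial trivial
      _ ≤ ε + (diam (Set.univ : Set Y) + 1) / η * η := by
          rw [div_mul_cancel₀ _ hη0.ne']
          linarith
      _ ≤ ε + (diam (Set.univ : Set Y) + 1) / η * dist a b := by gcongr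

theorem Continuous.exists_preimage_ball_subset_thickening_fiber {X Y : Type*}
    [PseudoMetricSpace X] [CompactSpace X] [MetricSpace Y] {π : X → Y} (hπ : Continuous π) (w : Y)
    {δ : ℝ} (hδ : 0 < δ) : ∃ η > 0, π ⁻¹' ball w η ⊆ thickening δ (π ⁻¹' {w}) := by
  set K := (thickening δ (π ⁻¹' {w}))ᶜ
  have hw : w ∉ π '' K := by
    rintro ⟨a, haK, rfl⟩
    exact haK (self_subset_thickening hδ _ rfl)
  obtain ⟨η, hη0, hη⟩ := isOpen_iff.1
    (hπ.isClosedMap K isOpen_thickening.isClosed_compl).isOpen_compl w hw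
  refine ⟨η, hη0, fun x hx => ?_⟩
  by_contra hxK
  exact hη hx ⟨x, hxK, rfl⟩

section factor

variable {X Y : Type*} [MetricSpace X] [MetricSpace Y] {T : X → X} {S : Y → Y} {π : X → Y}

lemma avgDist_semiconj_le (hπ : Semiconj π T S) {ε C : ℝ} (hε : 0 ≤ ε)
    (hdist : ∀ a b, dist (π a) (π b) ≤ ε + C * dist a b) (x x' : X) (n : ℕ) :
    avgDist S (π x) (π x') n ≤ ε + C * avgDist T x x' n := by
  rcases n.eq_zero_or_pos with rfl | hn
  · simpa [avgDist] using hε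
  have hsum : ∑ i ∈ Finset.range n, dist (S^[i] (π x)) (S^[i] (π x'))
      ≤ ∑ i ∈ Finset.range n, (ε + C * dist (T^[i] x) (T^[i] x')) := by
    gcongr with i
    rw [← (hπ.iterate_right i).eq, ← (hπ.iterate_right i).eq]
    exact hdist _ _
  calc avgDist S (π x) (π x') n
      ≤ (n : ℝ)⁻¹ * ∑ i ∈ Finset.range n, (ε + C * dist (T^[i] x) (T^[i] x')) := by
        unfold avgDist
        gcongr
    _ = ε + C * avgDist T x x' n := by
        rw [Finset.sum_add_distrib, Finset.sum_const, Finset.card_range, nsmul_eq_mul,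
          ← Finset.mul_sum, avgDist]
        field_simp

theorem MeanEquicontinuous.limsup_avgDist_semiconj_lt [BoundedSpace X] [BoundedSpace Y]
    (h : MeanEquicontinuous T) (hπ : UniformContinuous π) (hsc : Semiconj π T S) :
    ∀ ε > 0, ∃ δ > 0, ∀ x x', dist x x' < δ → limsup (avgDist S (π x) (π x')) atTop < ε := by
  intro ε hε
  obtain ⟨C, hC0, hC⟩ := hπ.exists_dist_le_add_mul (by positivity : 0 < ε / 4)
  obtain ⟨δ, hδ0, hδ⟩ := h (ε / (4 * C)) (by positivity)
  refine ⟨δ, hδ0, fun x x' hxx' => ?_⟩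
  have hmean : limsup (avgDist S (π x) (π x')) atTop ≤ ε / 2 := by
    refine limsup_le_of_le (isCoboundedUnder_avgDist S _ _) ?_
    filter_upwards [eventually_lt_of_limsup_lt (hδ x x' hxx') (isBoundedUnder_avgDist T x x')]
      with n hn
    calc avgDist S (π x) (π x') n ≤ ε / 4 + C * avgDist T x x' n :=
          avgDist_semiconj_le hsc (by positivity) hC x x' n
      _ ≤ ε / 4 + C * (ε / (4 * C)) := by gcongr
      _ = ε / 2 := by field_simp; ring
  linarith

theorem MeanEquicontinuous.meanEqPtAt_of_semiconj [CompactSpace X] [CompactSpace Y]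
    (h : MeanEquicontinuous T) (hπ : Continuous π) (hsurj : Surjective π) (hsc : Semiconj π T S)
    (w : Y) : MeanEqPtAt S w := by
  intro ε hε
  obtain ⟨δ, hδ0, hδ⟩ :=
    h.limsup_avgDist_semiconj_lt (CompactSpace.uniformContinuous_of_continuous hπ) hsc ε hε
  obtain ⟨η, hη0, hη⟩ := hπ.exists_preimage_ball_subset_thickening_fiber w hδ0
  refine ⟨η, hη0, fun y hy => ?_⟩
  obtain ⟨x, rfl⟩ := hsurj y
  obtain ⟨a, rfl, hxa⟩ := mem_thickening_iff.1 (hη (mem_ball'.2 hy))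
  exact hδ a x (by rwa [dist_comm])

end factor

theorem meanEquicontinuous_factor_general
    {X Y : Type*} [MetricSpace X] [CompactSpace X] [MetricSpace Y] [CompactSpace Y]
    (T : X → X) (S : Y → Y)
    (π : X → Y) (hπ : Continuous π) (hsurj : Function.Surjective π)
    (hcomm : π ∘ T = S ∘ π)
    (h : MeanEquicontinuous T) :
    MeanEquicontinuous S :=
  MeanEquicontinuous.of_forall_meanEqPtAt S fun w =>
    h.meanEqPtAt_of_semiconj hπ hsurj (fun x => congrFun hcomm x) w

theorem meanEquicontinuous_factor
    {X Y : Type*} [MetricSpace X] [CompactSpace X] [MetricSpace Y] [CompactSpace Y]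
    (T : X → X) (S : Y → Y) (hT : Continuous T) (hS : Continuous S)
    (π : X → Y) (hπ : Continuous π) (hsurj : Function.Surjective π)
    (hcomm : π ∘ T = S ∘ π)
    (h : MeanEquicontinuous T) :
    MeanEquicontinuous S :=
  meanEquicontinuous_factor_general T S π hπ hsurj hcomm h
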